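/- The maps (a,b) ↦ (2/(a+b), 2(a-b)/(a+b)) and (x,y) ↦ ((y+2)/(2x), -(y-2)/(2x)) are mutually inverse bijections between rational points (a,b) on a^3 + a^2b + ab^2 + b^3 = 1 and rational points (x,y) with x ≠ 0 on y^2 = x^3 - 4. -/

import Mathlib

/-!
Writing `s = a + b` and `d = a - b`, the quartic form factors as
`a^3 + a^2 b + a b^2 + b^3 = (a + b)(a^2 + b^2) = s (s^2 + d^2) / 2`, so the curve is
`s (s^2 + d^2) = 2`. In the coordinates `x = 2 / s`, `y = 2 d / s` this becomes
`y^2 = 4 d^2 / s^2 = (8 - 4 s^3) / s^3 = x^3 - 4`, and `s = 2 / x`, `d = y / x` inverts the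
substitution. On the curve `s ≠ 0`, because `s` divides `1`.
-/

namespace CubicToWeierstrass

variable {K : Type*} [Field K]

def toWeierstrass (a b : K) : K × K := (2 / (a + b), 2 * (a - b) / (a + b))

def ofWeierstrass (x y : K) : K × K := ((y + 2) / (2 * x), -(y - 2) / (2 * x))

theorem add_ne_zero_of_cubic_eq_one {a b : K} (h : a^3 + a^2*b + a*b^2 + b^3 = 1) :
    a + b ≠ 0 :=
  left_ne_zero_of_mul_eq_one (b := a^2 + b^2) (by linear_combination h)

theorem toWeierstrass_fst_ne_zero [NeZero (2 : K)] {a b : K} (hab : a + b ≠ 0) :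
    (toWeierstrass a b).1 ≠ 0 :=
  div_ne_zero two_ne_zero hab

theorem toWeierstrass_mem {a b : K} (h : a^3 + a^2*b + a*b^2 + b^3 = 1) :
    (toWeierstrass a b).2 ^ 2 = (toWeierstrass a b).1 ^ 3 - 4 := by
  have hab := add_ne_zero_of_cubic_eq_one h
  simp only [toWeierstrass]
  field_simp
  linear_combination 8 * h

theorem ofWeierstrass_toWeierstrass [NeZero (2 : K)] {a b : K} (hab : a + b ≠ 0) :
    ofWeierstrass (toWeierstrass a b).1 (toWeierstrass a b).2 = (a, b) := by
  simp only [toWeierstrass, ofWeierstrass, Prod.mk.injEq]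
  constructor <;> field_simp <;> ring

theorem ofWeierstrass_add [NeZero (2 : K)] {x y : K} (hx : x ≠ 0) :
    (ofWeierstrass x y).1 + (ofWeierstrass x y).2 = 2 / x := by
  simp only [ofWeierstrass]
  field_simp
  ring

theorem ofWeierstrass_sub [NeZero (2 : K)] {x y : K} (hx : x ≠ 0) :
    (ofWeierstrass x y).1 - (ofWeierstrass x y).2 = y / x := by
  simp only [ofWeierstrass]
  field_simp
  ring

theorem ofWeierstrass_mem [NeZero (2 : K)] {x y : K} (hx : x ≠ 0) (h : y^2 = x^3 - 4) :
    (ofWeierstrass x y).1 ^ 3 + (ofWeierstrass x y).1 ^ 2 * (ofWeierstrass x y).2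
      + (ofWeierstrass x y).1 * (ofWeierstrass x y).2 ^ 2 + (ofWeierstrass x y).2 ^ 3 = 1 := by
  simp only [ofWeierstrass]
  field_simp
  linear_combination 8 * h

theorem toWeierstrass_ofWeierstrass [NeZero (2 : K)] {x y : K} (hx : x ≠ 0) :
    toWeierstrass (ofWeierstrass x y).1 (ofWeierstrass x y).2 = (x, y) := by
  simp only [toWeierstrass, ← mul_div_assoc, ofWeierstrass_add hx, ofWeierstrass_sub hx]
  simp only [Prod.mk.injEq]
  constructor <;> field_simp

end CubicToWeierstrass

open CubicToWeierstrass in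
theorem stmt_7 :
    (∀ a b : ℚ, a^3 + a^2*b + a*b^2 + b^3 = 1 →
      (2/(a+b)) ≠ 0 ∧
      (2*(a-b)/(a+b))^2 = (2/(a+b))^3 - 4 ∧
      ((2*(a-b)/(a+b)) + 2)/(2*(2/(a+b))) = a ∧
      -((2*(a-b)/(a+b)) - 2)/(2*(2/(a+b))) = b) ∧
    (∀ x y : ℚ, x ≠ 0 → y^2 = x^3 - 4 →
      ((y+2)/(2*x))^3 + ((y+2)/(2*x))^2 * (-(y-2)/(2*x))
        + ((y+2)/(2*x)) * (-(y-2)/(2*x))^2 + (-(y-2)/(2*x))^3 = 1 ∧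
      2/((y+2)/(2*x) + (-(y-2)/(2*x))) = x ∧
      2*((y+2)/(2*x) - (-(y-2)/(2*x)))/((y+2)/(2*x) + (-(y-2)/(2*x))) = y) := by
  refine ⟨fun a b h => ?_, fun x y hx h => ?_⟩
  · have hab := add_ne_zero_of_cubic_eq_one h
    have hinv := ofWeierstrass_toWeierstrass hab
    exact ⟨toWeierstrass_fst_ne_zero hab, toWeierstrass_mem h,
      congrArg Prod.fst hinv, congrArg Prod.snd hinv⟩
  · have hinv := toWeierstrass_ofWeierstrass (y := y) hx
    exact ⟨ofWeierstrass_mem hx h, congrArg Prod.fst hinv, congrArg Prod.snd hinv⟩
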